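/- Suppose 0 < 1/n ≪ c, ξ ≪ 1, n is a multiple of 3, and G is an oriented graph on n vertices with δ⁰(G) ≥ (1/2 - c)n. If there exists a partition {V₁, V₂, V₃} of V(G) with |V₁| ≡ |V₂| ≡ |V₃| (mod 3) such that for every i ∈ {1,2,3} and every v ∈ Vᵢ we have d⁺(v, V_{i+1}) ≥ (1/3 - ξ)n and d⁻(v, V_{i-1}) ≥ (1/3 - ξ)n (indices mod 3), then G has a cyclic triangle factor. -/

import Mathlib

open Finset
open scoped Classical

/-- An oriented graph: no loops and no pair of antiparallel edges. -/
def IsOriented {n : ℕ} (G : Fin n → Fin n → Prop) : Prop :=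
  (∀ v, ¬ G v v) ∧ ∀ u v : Fin n, G u v → ¬ G v u

/-- `d⁺(v, A)`: number of out-neighbors of `v` in `A`. -/
noncomputable def outDegOn {n : ℕ} (G : Fin n → Fin n → Prop) (v : Fin n)
    (A : Finset (Fin n)) : ℕ :=
  (A.filter fun u => G v u).card

/-- `d⁻(v, A)`: number of in-neighbors of `v` in `A`. -/
noncomputable def inDegOn {n : ℕ} (G : Fin n → Fin n → Prop) (v : Fin n)
    (A : Finset (Fin n)) : ℕ :=
  (A.filter fun u => G u v).card

/-- outdegree `d⁺(v)`. -/
noncomputable def outDeg {n : ℕ} (G : Fin n → Fin n → Prop) (v : Fin n) : ℕ :=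
  outDegOn G v univ

/-- indegree `d⁻(v)`. -/
noncomputable def inDeg {n : ℕ} (G : Fin n → Fin n → Prop) (v : Fin n) : ℕ :=
  inDegOn G v univ

/-- The minimum semidegree condition `δ⁰(G) ≥ b`. -/
def MinSemidegreeGE {n : ℕ} (G : Fin n → Fin n → Prop) (b : ℝ) : Prop :=
  ∀ v : Fin n, b ≤ (outDeg G v : ℝ) ∧ b ≤ (inDeg G v : ℝ)

/-- `e⁺(A, B)`: number of edges directed from `A` to `B`. -/
noncomputable def eOut {n : ℕ} (G : Fin n → Fin n → Prop) (A B : Finset (Fin n)) : ℕ :=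
  ∑ a ∈ A, outDegOn G a B

/-- `s` is the vertex set of a cyclic triangle. -/
def IsCycTri {n : ℕ} (G : Fin n → Fin n → Prop) (s : Finset (Fin n)) : Prop :=
  ∃ a b c : Fin n, G a b ∧ G b c ∧ G c a ∧ s = {a, b, c}

/-- `s` is the vertex set of a transitive triangle. -/
def IsTrnTri {n : ℕ} (G : Fin n → Fin n → Prop) (s : Finset (Fin n)) : Prop :=
  ∃ a b c : Fin n, G a b ∧ G b c ∧ G a c ∧ s = {a, b, c}

/-- `cyc(A)`: number of cyclic triangles with all vertices in `A`. -/
noncomputable def cycIn {n : ℕ} (G : Fin n → Fin n → Prop) (A : Finset (Fin n)) : ℕ :=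
  ((A.powersetCard 3).filter fun s => IsCycTri G s).card

/-- `trn(A)`: number of transitive triangles with all vertices in `A`. -/
noncomputable def trnIn {n : ℕ} (G : Fin n → Fin n → Prop) (A : Finset (Fin n)) : ℕ :=
  ((A.powersetCard 3).filter fun s => IsTrnTri G s).card

/-- `cyc(A, B, C)`: number of cyclic triangles with one vertex in each of `A`, `B`, `C`
(in the sense of some labeling of its vertex set). -/
noncomputable def cyc3 {n : ℕ} (G : Fin n → Fin n → Prop) (A B C : Finset (Fin n)) : ℕ :=
  (((univ : Finset (Fin n)).powersetCard 3).filter fun s =>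
    IsCycTri G s ∧ ∃ x ∈ A, ∃ y ∈ B, ∃ z ∈ C, s = ({x, y, z} : Finset (Fin n))).card

/-- A cyclic triangle tiling: a collection of vertex-disjoint cyclic triangles. -/
def IsCycTiling {n : ℕ} (G : Fin n → Fin n → Prop) (C : Finset (Finset (Fin n))) : Prop :=
  (∀ s ∈ C, IsCycTri G s) ∧ ∀ s ∈ C, ∀ t ∈ C, s ≠ t → Disjoint s t

/-- A cyclic triangle factor: a tiling covering every vertex. -/
def IsCycFactor {n : ℕ} (G : Fin n → Fin n → Prop) (C : Finset (Finset (Fin n))) : Prop :=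
  IsCycTiling G C ∧ C.biUnion id = univ

/-- `W` can be perfectly covered by vertex-disjoint cyclic triangles
(i.e. `H(G)[W]` has a perfect matching). -/
def HasCycPM {n : ℕ} (G : Fin n → Fin n → Prop) (W : Finset (Fin n)) : Prop :=
  ∃ C : Finset (Finset (Fin n)), IsCycTiling G C ∧ C.biUnion id = W

/-- The number of `(H(G), x, y)`-linking `(3ℓ-1)`-sets. -/
noncomputable def linkCount {n : ℕ} (G : Fin n → Fin n → Prop) (ℓ : ℕ) (x y : Fin n) : ℕ :=
  (((univ : Finset (Fin n)).powersetCard (3 * ℓ - 1)).filter fun S =>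
    x ∉ S ∧ y ∉ S ∧ HasCycPM G (insert x S) ∧ HasCycPM G (insert y S)).card

/-!
Inside a part `Vᵢ`, a vertex misses at most about `n/6 + (c + ξ)n` of `Vᵢ` in each direction,
so `G[Vᵢ]` has minimum semidegree above `2|Vᵢ|/5`; then the out-neighbourhood and the
in-neighbourhood of a vertex cannot be separated, which yields a cyclic triangle. Greedily
removing `(|Vᵢ| - t)/3` cyclic triangles from each part, where `t` is the smallest part size
(possible by the congruence condition), leaves three sets `Wᵢ` of size `t` in which every vertex
still has more than `3t/4` out-neighbours in the next set and in-neighbours in the previous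
one, so any two such neighbourhoods in the same set share more than `t/2` vertices. Instead of
Johansson's theorem, Hall's theorem (degrees above `t/2` on both sides of a balanced bipartite
graph force a perfect matching) now gives bijections `f : W₁ → W₂` along edges and
`g : W₁ → W₃` with `f x → g x → x`, and the triangles `{x, f x, g x}` tile `W₁ ∪ W₂ ∪ W₃`.
-/

lemma exists_bijOn_of_le_card_filter {α : Type*} {W₁ W₂ : Finset α} (P : α → α → Prop) {m : ℕ}
    (hcard : W₂.card = W₁.card) (hm : W₁.card < 2 * m)
    (h₁ : ∀ x ∈ W₁, m ≤ (W₂.filter (P x)).card) (h₂ : ∀ y ∈ W₂, m ≤ (W₁.filter (P · y)).card) :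
    ∃ f : α → α, Set.BijOn f W₁ W₂ ∧ ∀ x ∈ W₁, P x (f x) := by
  set N : W₁ → Finset α := fun x => W₂.filter (P x)
  have hall : ∀ s : Finset W₁, s.card ≤ (s.biUnion N).card := by
    intro s
    -- A set of at most `m` vertices fits into the neighbourhood of any of its members; a larger
    -- one meets the neighbourhood of every `y ∈ W₂`, as `2m > |W₁|`.
    rcases le_or_gt s.card m with hs | hs
    · obtain rfl | ⟨x, hx⟩ := s.eq_empty_or_nonempty
      · simp
      · exact hs.trans ((h₁ x x.2).trans (card_le_card (subset_biUnion_of_mem N hx)))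
    · suffices W₂ ⊆ s.biUnion N by
        have := card_le_card this
        have := card_le_card_of_injOn Subtype.val (fun x _ => x.2) (Subtype.val_injective.injOn)
          (s := s) (t := W₁)
        omega
      intro y hy
      obtain ⟨x, hx⟩ := inter_nonempty_of_card_lt_card_add_card
        (s := W₁) (t := s.map (Function.Embedding.subtype _)) (u := W₁.filter (P · y))
        (fun z hz => by obtain ⟨x, -, rfl⟩ := mem_map.1 hz; exact x.2) (filter_subset _ _)
        (by have := h₂ y hy; rw [card_map]; omega)
      simp only [mem_inter, mem_map, Function.Embedding.subtype_apply, mem_filter] at hx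
      obtain ⟨⟨x', hx', rfl⟩, -, hP⟩ := hx
      exact mem_biUnion.2 ⟨x', hx', mem_filter.2 ⟨hy, hP⟩⟩
  obtain ⟨g, hg_inj, hg⟩ := (all_card_le_biUnion_card_iff_exists_injective N).1 hall
  set f : α → α := fun x => if hx : x ∈ W₁ then g ⟨x, hx⟩ else x
  have hf : ∀ x (hx : x ∈ W₁), f x = g ⟨x, hx⟩ := fun x hx => dif_pos hx
  have hmaps : Set.MapsTo f W₁ W₂ := fun x hx => by
    rw [hf x hx]
    exact (mem_filter.1 (hg ⟨x, hx⟩)).1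
  have hinj : Set.InjOn f W₁ := fun x hx y hy hxy => by
    rw [hf x hx, hf y hy] at hxy
    exact congrArg Subtype.val (hg_inj hxy)
  refine ⟨f, ⟨hmaps, hinj, surjOn_of_injOn_of_card_le f hmaps hinj hcard.le⟩, fun x hx => ?_⟩
  rw [hf x hx]
  exact (mem_filter.1 (hg ⟨x, hx⟩)).2

lemma card_filter_add_card_filter_le {α : Type*} (s : Finset α) (p q : α → Prop) :
    (s.filter p).card + (s.filter q).card ≤ (s.filter fun a => p a ∧ q a).card + s.card := by
  rw [filter_and, ← card_inter_add_card_union]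
  exact Nat.add_le_add_left (card_le_card (union_subset (filter_subset _ _) (filter_subset _ _))) _

def OutInDegOnGE {n : ℕ} (G : Fin n → Fin n → Prop) (d : ℕ) (A B C : Finset (Fin n)) : Prop :=
  ∀ v ∈ A, d ≤ outDegOn G v B ∧ d ≤ inDegOn G v C

section

variable {n : ℕ} {G : Fin n → Fin n → Prop}

lemma IsOriented.flip (hG : IsOriented G) : IsOriented (flip G) :=
  ⟨hG.1, fun u v h => hG.2 v u h⟩

lemma outDegOn_union_le (v : Fin n) (A B : Finset (Fin n)) :
    outDegOn G v (A ∪ B) ≤ outDegOn G v A + outDegOn G v B := by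
  unfold outDegOn
  rw [filter_union]
  exact card_union_le _ _

lemma outDegOn_le_sdiff_add_card (v : Fin n) (A S : Finset (Fin n)) :
    outDegOn G v A ≤ outDegOn G v (A \ S) + S.card :=
  calc outDegOn G v A ≤ outDegOn G v (A \ S ∪ S) :=
        card_le_card (filter_subset_filter _ (by simp))
    _ ≤ outDegOn G v (A \ S) + S.card :=
        (outDegOn_union_le v _ _).trans (Nat.add_le_add_left (card_filter_le _ _) _)

lemma inDegOn_le_sdiff_add_card (v : Fin n) (A S : Finset (Fin n)) :
    inDegOn G v A ≤ inDegOn G v (A \ S) + S.card :=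
  outDegOn_le_sdiff_add_card (G := flip G) v A S

lemma outDegOn_add_inDegOn_le (hG : IsOriented G) (v : Fin n) (A : Finset (Fin n)) :
    outDegOn G v A + inDegOn G v A ≤ (A.erase v).card := by
  unfold outDegOn inDegOn
  rw [← card_union_of_disjoint (disjoint_filter.2 fun u _ h => hG.2 v u h)]
  refine card_le_card fun u hu => ?_
  simp only [mem_union, mem_filter] at hu
  rcases hu with ⟨hu, h⟩ | ⟨hu, h⟩ <;>
    exact mem_erase.2 ⟨fun e => hG.1 v (e ▸ h), hu⟩

lemma sum_outDegOn_eq_sum_inDegOn (A : Finset (Fin n)) :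
    ∑ a ∈ A, outDegOn G a A = ∑ a ∈ A, inDegOn G a A := by
  simp only [outDegOn, inDegOn, card_filter]
  exact sum_comm

lemma exists_two_mul_outDegOn_lt (hG : IsOriented G) {A : Finset (Fin n)} (hA : A.Nonempty) :
    ∃ a ∈ A, 2 * outDegOn G a A < A.card := by
  have hsum : ∑ a ∈ A, (2 * outDegOn G a A + 1) ≤ ∑ _a ∈ A, A.card :=
    calc ∑ a ∈ A, (2 * outDegOn G a A + 1)
        = ∑ a ∈ A, (outDegOn G a A + inDegOn G a A + 1) := by
          simp only [sum_add_distrib, ← mul_sum, sum_outDegOn_eq_sum_inDegOn]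
          ring
      _ ≤ ∑ _a ∈ A, A.card := sum_le_sum fun a ha => by
          have := outDegOn_add_inDegOn_le hG a A
          have := card_erase_add_one ha
          omega
  exact exists_le_of_sum_le hA hsum

lemma OutInDegOnGE.le_card {d : ℕ} {A B C : Finset (Fin n)} (h : OutInDegOnGE G d A B C)
    {v : Fin n} (hv : v ∈ A) : d ≤ B.card ∧ d ≤ C.card :=
  ⟨(h v hv).1.trans (card_filter_le _ _), (h v hv).2.trans (card_filter_le _ _)⟩

lemma OutInDegOnGE.sdiff {d s : ℕ} {A B C : Finset (Fin n)} (h : OutInDegOnGE G d A B C)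
    (SA : Finset (Fin n)) {SB SC : Finset (Fin n)} (hB : SB.card ≤ s) (hC : SC.card ≤ s) :
    OutInDegOnGE G (d - s) (A \ SA) (B \ SB) (C \ SC) := fun v hv => by
  have := h v (mem_sdiff.1 hv).1
  have := outDegOn_le_sdiff_add_card (G := G) v B SB
  have := inDegOn_le_sdiff_add_card (G := G) v C SC
  omega

lemma exists_cycTri_of_outInDegOnGE (hG : IsOriented G) {W : Finset (Fin n)} (hW : W.Nonempty)
    {d : ℕ} (hdeg : OutInDegOnGE G d W W W) (hd : 2 * W.card ≤ 5 * d) :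
    ∃ a ∈ W, ∃ b ∈ W, ∃ c ∈ W, G a b ∧ G b c ∧ G c a := by
  obtain ⟨v, hv⟩ := hW
  set A := W.filter (G v)
  set B := W.filter (G · v)
  -- If no edge goes from `A = N⁺(v)` to `B = N⁻(v)`, a vertex `a ∈ A` with few out-neighbours
  -- inside `A` has all its other out-neighbours outside `A ∪ B ∪ {v}`, and there are too few.
  by_contra! hno
  have hAB : ∀ a ∈ A, ∀ b ∈ B, ¬ G a b := fun a ha b hb hab =>
    hno v hv a (mem_filter.1 ha).1 b (mem_filter.1 hb).1 (mem_filter.1 ha).2 hab (mem_filter.1 hb).2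
  have hAd : d ≤ A.card := (hdeg v hv).1
  have hBd : d ≤ B.card := (hdeg v hv).2
  have := card_pos.2 ⟨v, hv⟩
  obtain ⟨a, ha, ha_small⟩ := exists_two_mul_outDegOn_lt hG (A := A) (card_pos.1 (by omega))
  set X := insert v (A ∪ B)
  have hXW : X ⊆ W := insert_subset hv (union_subset (filter_subset _ _) (filter_subset _ _))
  have hXcard : X.card = A.card + B.card + 1 := by
    rw [card_insert_of_notMem, card_union_of_disjoint (disjoint_filter.2 fun u _ h => hG.2 v u h)]
    simp only [A, B, mem_union, mem_filter, not_or]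
    exact ⟨fun h => hG.1 v h.2, fun h => hG.1 v h.2⟩
  have hout : outDegOn G a W ≤ outDegOn G a A + (W \ X).card := by
    refine (card_le_card fun u hu => ?_).trans (card_union_le _ _)
    obtain ⟨huW, hau⟩ := mem_filter.1 hu
    by_cases huA : u ∈ A
    · exact mem_union_left _ (mem_filter.2 ⟨huA, hau⟩)
    · refine mem_union_right _ (mem_sdiff.2 ⟨huW, ?_⟩)
      simp only [X, mem_insert, mem_union, not_or]
      refine ⟨?_, huA, fun huB => hAB a ha u huB hau⟩
      rintro rfl
      exact hG.2 _ _ (mem_filter.1 ha).2 hau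
  have := (hdeg a (mem_filter.1 ha).1).1
  have := card_sdiff_add_card_eq_card hXW
  omega

lemma hasCycPM_empty : HasCycPM G ∅ :=
  ⟨∅, ⟨by simp, by simp⟩, biUnion_empty⟩

lemma hasCycPM_of_cycle {a b c : Fin n} (hab : G a b) (hbc : G b c) (hca : G c a) :
    HasCycPM G {a, b, c} :=
  ⟨{{a, b, c}}, ⟨by simpa using ⟨a, b, c, hab, hbc, hca, rfl⟩, by simp⟩, by simp⟩

lemma HasCycPM.union {S T : Finset (Fin n)} (hS : HasCycPM G S) (hT : HasCycPM G T)
    (hST : Disjoint S T) : HasCycPM G (S ∪ T) := by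
  obtain ⟨C, ⟨hC, hCdisj⟩, rfl⟩ := hS
  obtain ⟨D, ⟨hD, hDdisj⟩, rfl⟩ := hT
  refine ⟨C ∪ D, ⟨fun s hs => (mem_union.1 hs).elim (hC s) (hD s), ?_⟩, union_biUnion⟩
  have hsub : ∀ {E : Finset (Finset (Fin n))} {s}, s ∈ E → s ⊆ E.biUnion id :=
    fun hs => subset_biUnion_of_mem id hs
  intro s hs t ht hne
  rcases mem_union.1 hs with hs | hs <;> rcases mem_union.1 ht with ht | ht
  · exact hCdisj s hs t ht hne
  · exact hST.mono (hsub hs) (hsub ht)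
  · exact (hST.mono (hsub ht) (hsub hs)).symm
  · exact hDdisj s hs t ht hne

lemma hasCycPM_biUnion {s : Finset (Fin n)} {T : Fin n → Finset (Fin n)}
    (hT : ∀ x ∈ s, IsCycTri G (T x)) (hdisj : (s : Set (Fin n)).PairwiseDisjoint T) :
    HasCycPM G (s.biUnion T) := by
  refine ⟨s.image T, ⟨?_, ?_⟩, by rw [image_biUnion]; rfl⟩
  · simpa using hT
  · simp only [mem_image]
    rintro _ ⟨x, hx, rfl⟩ _ ⟨y, hy, rfl⟩ hne
    exact hdisj hx hy fun h => hne (h ▸ rfl)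

lemma exists_hasCycPM_subset_card_eq (hG : IsOriented G) (k : ℕ) :
    ∀ {W : Finset (Fin n)} {d : ℕ}, OutInDegOnGE G d W W W → 3 * k ≤ W.card →
      2 * W.card + 9 * k ≤ 5 * d + 9 → ∃ S ⊆ W, S.card = 3 * k ∧ HasCycPM G S := by
  -- `2|W| ≤ 5d` has to survive `k - 1` removals, each lowering `|W|` and `d` by `3`.
  induction k with
  | zero => exact fun _ _ _ => ⟨∅, empty_subset _, rfl, hasCycPM_empty⟩
  | succ k ih =>
    intro W d hdeg hk hnum
    obtain ⟨a, ha, b, hb, c, hc, hab, hbc, hca⟩ :=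
      exists_cycTri_of_outInDegOnGE hG (card_pos.1 (by omega)) hdeg (by omega)
    set T : Finset (Fin n) := {a, b, c}
    have hTW : T ⊆ W := by simp [T, insert_subset_iff, ha, hb, hc]
    have hTcard : T.card = 3 := by
      have : a ≠ b := fun h => hG.1 b (h ▸ hab)
      have : b ≠ c := fun h => hG.1 c (h ▸ hbc)
      have : c ≠ a := fun h => hG.1 a (h ▸ hca)
      simp [T, card_insert_of_notMem, *, Ne.symm]
    have hW' := card_sdiff_add_card_eq_card hTW
    obtain ⟨S, hSW, hScard, hS⟩ := ih (W := W \ T) (d := d - 3)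
      (hdeg.sdiff T hTcard.le hTcard.le) (by omega) (by omega)
    have hST : Disjoint S T := disjoint_of_subset_left hSW sdiff_disjoint
    refine ⟨S ∪ T, union_subset (hSW.trans sdiff_subset) hTW, ?_,
      hS.union (hasCycPM_of_cycle hab hbc hca) hST⟩
    rw [card_union_of_disjoint hST, hScard, hTcard]
    ring

lemma hasCycPM_of_bijOn {W₁ W₂ W₃ : Finset (Fin n)} {f g : Fin n → Fin n}
    (h₁₂ : Disjoint W₁ W₂) (h₁₃ : Disjoint W₁ W₃) (h₂₃ : Disjoint W₂ W₃)
    (hf : Set.BijOn f W₁ W₂) (hg : Set.BijOn g W₁ W₃)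
    (hGf : ∀ x ∈ W₁, G x (f x)) (hGg : ∀ x ∈ W₁, G (f x) (g x) ∧ G (g x) x) :
    HasCycPM G (W₁ ∪ W₂ ∪ W₃) := by
  have hW : W₁ ∪ W₂ ∪ W₃ = W₁.biUnion fun x => {x, f x, g x} := by
    ext y
    simp only [mem_union, mem_biUnion, mem_insert, mem_singleton]
    constructor
    · rintro ((hy | hy) | hy)
      · exact ⟨y, hy, Or.inl rfl⟩
      · obtain ⟨x, hx, rfl⟩ := hf.surjOn hy
        exact ⟨x, hx, Or.inr (Or.inl rfl)⟩
      · obtain ⟨x, hx, rfl⟩ := hg.surjOn hy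
        exact ⟨x, hx, Or.inr (Or.inr rfl)⟩
    · rintro ⟨x, hx, rfl | rfl | rfl⟩
      · exact Or.inl (Or.inl hx)
      · exact Or.inl (Or.inr (hf.mapsTo hx))
      · exact Or.inr (hg.mapsTo hx)
  rw [hW]
  refine hasCycPM_biUnion (fun x hx => ⟨x, f x, g x, hGf x hx, (hGg x hx).1, (hGg x hx).2, rfl⟩)
    fun x hx y hy hxy => ?_
  have := hf.injOn hx hy
  have := hg.injOn hx hy
  have := hf.mapsTo hx
  have := hf.mapsTo hy
  have := hg.mapsTo hx
  have := hg.mapsTo hy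
  simp only [mem_coe, Function.onFun, disjoint_left, mem_insert, mem_singleton] at *
  grind

lemma hasCycPM_of_outInDegOnGE {W₁ W₂ W₃ : Finset (Fin n)} {m : ℕ}
    (h₁₂ : Disjoint W₁ W₂) (h₁₃ : Disjoint W₁ W₃) (h₂₃ : Disjoint W₂ W₃)
    (hc₂ : W₂.card = W₁.card) (hc₃ : W₃.card = W₁.card) (hm : 3 * W₁.card < 4 * m)
    (h₁ : OutInDegOnGE G m W₁ W₂ W₃) (h₂ : OutInDegOnGE G m W₂ W₃ W₁)
    (h₃ : OutInDegOnGE G m W₃ W₁ W₂) :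
    HasCycPM G (W₁ ∪ W₂ ∪ W₃) := by
  obtain ⟨f, hf, hGf⟩ := exists_bijOn_of_le_card_filter G hc₂ (by omega)
    (fun x hx => (h₁ x hx).1) (fun y hy => (h₂ y hy).2)
  obtain ⟨g, hg, hGg⟩ := exists_bijOn_of_le_card_filter (m := 2 * m - W₁.card)
    (fun x z => G (f x) z ∧ G z x) hc₃ (by omega)
    (fun x hx => by
      have := card_filter_add_card_filter_le W₃ (fun z => G (f x) z) (G · x)
      have := (h₂ (f x) (hf.mapsTo hx)).1
      have := (h₁ x hx).2
      unfold outDegOn inDegOn at *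
      convert (by omega : 2 * m - W₁.card ≤ (W₃.filter fun z => G (f x) z ∧ G z x).card))
    (fun z hz => by
      have := card_filter_add_card_filter_le W₁ (fun x => G (f x) z) (fun x => G z x)
      have : inDegOn G z W₂ ≤ (W₁.filter fun x => G (f x) z).card :=
        card_le_card_of_surjOn f fun y hy => by
          obtain ⟨hy, hyz⟩ := mem_filter.1 hy
          obtain ⟨x, hx, rfl⟩ := hf.surjOn hy
          exact ⟨x, mem_filter.2 ⟨hx, hyz⟩, rfl⟩
      have := (h₃ z hz).1
      have := (h₃ z hz).2
      unfold outDegOn at *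
      convert (by omega : 2 * m - W₁.card ≤ (W₁.filter fun x => G (f x) z ∧ G z x).card))
  exact hasCycPM_of_bijOn h₁₂ h₁₃ h₂₃ hf hg hGf hGg

lemma outDeg_add_inDegOn_le (hG : IsOriented G) {A B C : Finset (Fin n)}
    (hcover : A ∪ B ∪ C = univ) (v : Fin n) :
    outDeg G v + inDegOn G v C ≤ outDegOn G v A + B.card + C.card := by
  have hsplit : outDeg G v ≤ outDegOn G v A + outDegOn G v B + outDegOn G v C := by
    unfold outDeg
    rw [← hcover]
    exact (outDegOn_union_le v _ _).trans (Nat.add_le_add_right (outDegOn_union_le v _ _) _)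
  have := outDegOn_add_inDegOn_le hG v C
  have := card_erase_le (s := C) (a := v)
  have : outDegOn G v B ≤ B.card := card_filter_le _ _
  omega

lemma inDeg_add_outDegOn_le (hG : IsOriented G) {A B C : Finset (Fin n)}
    (hcover : A ∪ B ∪ C = univ) (v : Fin n) :
    inDeg G v + outDegOn G v B ≤ inDegOn G v A + B.card + C.card := by
  have := outDeg_add_inDegOn_le hG.flip (A := A) (B := C) (C := B)
    (by rw [← hcover, union_right_comm]) v
  change inDeg G v + outDegOn G v B ≤ inDegOn G v A + C.card + B.card at this
  omega

lemma exists_hasCycPM_subset_card_sdiff_eq (hG : IsOriented G) {δ β t : ℕ}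
    (hδ : OutInDegOnGE G δ univ univ univ) {A B C : Finset (Fin n)}
    (hcover : A ∪ B ∪ C = univ) (hcard : A.card + B.card + C.card = n)
    (hA : OutInDegOnGE G β A B C) (ht : t ≤ A.card) (hmod : 3 ∣ A.card - t)
    (hnum : 5 * n ≤ 5 * (δ + β) + 3 * t) :
    ∃ S ⊆ A, (A \ S).card = t ∧ HasCycPM G S := by
  have hinner : OutInDegOnGE G (δ + β + A.card - n) A A A := fun v hv => by
    have := outDeg_add_inDegOn_le hG hcover v
    have := inDeg_add_outDegOn_le hG hcover v
    have := hδ v (mem_univ v)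
    have := hA v hv
    unfold outDeg inDeg at *
    omega
  obtain ⟨S, hSA, hS, hSpm⟩ :=
    exists_hasCycPM_subset_card_eq hG ((A.card - t) / 3) hinner (by omega) (by omega)
  exact ⟨S, hSA, by rw [card_sdiff_of_subset hSA]; omega, hSpm⟩

lemma le_card_of_outInDegOnGE {β : ℕ} (hn : 0 < n) (hβ : 0 < β) {V₁ V₂ V₃ : Finset (Fin n)}
    (hcover : V₁ ∪ V₂ ∪ V₃ = univ) (hV₁ : OutInDegOnGE G β V₁ V₂ V₃)
    (hV₂ : OutInDegOnGE G β V₂ V₃ V₁) (hV₃ : OutInDegOnGE G β V₃ V₁ V₂) :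
    β ≤ V₁.card ∧ β ≤ V₂.card ∧ β ≤ V₃.card := by
  have hv : (⟨0, hn⟩ : Fin n) ∈ V₁ ∪ V₂ ∪ V₃ := hcover ▸ mem_univ _
  rcases mem_union.1 hv with hv | hv
  · rcases mem_union.1 hv with hv | hv
    · obtain ⟨w, hw⟩ := card_pos.1 (hβ.trans_le (hV₁.le_card hv).1)
      exact ⟨(hV₂.le_card hw).2, (hV₁.le_card hv).1, (hV₁.le_card hv).2⟩
    · obtain ⟨w, hw⟩ := card_pos.1 (hβ.trans_le (hV₂.le_card hv).1)
      exact ⟨(hV₂.le_card hv).2, (hV₃.le_card hw).2, (hV₂.le_card hv).1⟩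
  · obtain ⟨w, hw⟩ := card_pos.1 (hβ.trans_le (hV₃.le_card hv).1)
    exact ⟨(hV₃.le_card hv).1, (hV₃.le_card hv).2, (hV₁.le_card hw).2⟩

theorem exists_isCycFactor_of_partition (hG : IsOriented G) (hn : 0 < n) {δ β : ℕ}
    (hδ : OutInDegOnGE G δ univ univ univ) {V₁ V₂ V₃ : Finset (Fin n)}
    (h₁₂ : Disjoint V₁ V₂) (h₁₃ : Disjoint V₁ V₃) (h₂₃ : Disjoint V₂ V₃)
    (hcover : V₁ ∪ V₂ ∪ V₃ = univ) (hmod₁₂ : V₁.card % 3 = V₂.card % 3)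
    (hmod₂₃ : V₂.card % 3 = V₃.card % 3) (hV₁ : OutInDegOnGE G β V₁ V₂ V₃)
    (hV₂ : OutInDegOnGE G β V₂ V₃ V₁) (hV₃ : OutInDegOnGE G β V₃ V₁ V₂)
    (hδβ : 5 * n ≤ 5 * δ + 8 * β) (hβ : 4 * n < 13 * β) :
    ∃ C, IsCycFactor G C := by
  have hcard : V₁.card + V₂.card + V₃.card = n := by
    rw [← card_union_of_disjoint h₁₂, ← card_union_of_disjoint (disjoint_union_left.2 ⟨h₁₃, h₂₃⟩),
      hcover, card_univ, Fintype.card_fin]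
  have hcover₂ : V₂ ∪ V₃ ∪ V₁ = univ := by rw [← hcover]; ac_rfl
  have hcover₃ : V₃ ∪ V₁ ∪ V₂ = univ := by rw [← hcover]; ac_rfl
  obtain ⟨hβ₁, hβ₂, hβ₃⟩ := le_card_of_outInDegOnGE hn (by omega) hcover hV₁ hV₂ hV₃
  set t := min V₁.card (min V₂.card V₃.card)
  obtain ⟨S₁, hS₁, hW₁, hS₁pm⟩ := exists_hasCycPM_subset_card_sdiff_eq hG hδ hcover hcard hV₁
    (t := t) (by omega) (by omega) (by omega)
  obtain ⟨S₂, hS₂, hW₂, hS₂pm⟩ := exists_hasCycPM_subset_card_sdiff_eq hG hδ hcover₂ (by omega) hV₂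
    (t := t) (by omega) (by omega) (by omega)
  obtain ⟨S₃, hS₃, hW₃, hS₃pm⟩ := exists_hasCycPM_subset_card_sdiff_eq hG hδ hcover₃ (by omega) hV₃
    (t := t) (by omega) (by omega) (by omega)
  have hS₁c := card_sdiff_add_card_eq_card hS₁
  have hS₂c := card_sdiff_add_card_eq_card hS₂
  have hS₃c := card_sdiff_add_card_eq_card hS₃
  -- `|Sᵢ| = |Vᵢ| - t ≤ n - 2β - t`, since the other two parts have at least `β` vertices each.
  have hW : HasCycPM G (V₁ \ S₁ ∪ V₂ \ S₂ ∪ V₃ \ S₃) :=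
    hasCycPM_of_outInDegOnGE (m := β - (n - 2 * β - t))
      (h₁₂.mono sdiff_subset sdiff_subset) (h₁₃.mono sdiff_subset sdiff_subset)
      (h₂₃.mono sdiff_subset sdiff_subset) (by omega) (by omega) (by omega)
      (hV₁.sdiff S₁ (by omega) (by omega)) (hV₂.sdiff S₂ (by omega) (by omega))
      (hV₃.sdiff S₃ (by omega) (by omega))
  have hS : HasCycPM G (S₁ ∪ S₂ ∪ S₃) :=
    (hS₁pm.union hS₂pm (h₁₂.mono hS₁ hS₂)).union hS₃pm
      (disjoint_union_left.2 ⟨h₁₃.mono hS₁ hS₃, h₂₃.mono hS₂ hS₃⟩)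
  obtain ⟨C, hC, hCcover⟩ := hS.union hW (by
    simp only [disjoint_left, mem_union, mem_sdiff] at h₁₂ h₁₃ h₂₃ ⊢
    grind)
  refine ⟨C, hC, hCcover.trans ?_⟩
  rw [← hcover]
  ext x
  simp only [disjoint_left] at h₁₂ h₁₃ h₂₃
  simp only [mem_union, mem_sdiff]
  grind

end

theorem stmt_13 :
    ∃ ε > (0:ℝ), ∀ c ξ : ℝ, 0 < c → c ≤ ε → 0 < ξ → ξ ≤ ε →
    ∃ N : ℕ, ∀ n : ℕ, N ≤ n → 3 ∣ n → ∀ G : Fin n → Fin n → Prop, IsOriented G →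
      MinSemidegreeGE G ((1/2 - c) * n) →
      ∀ V1 V2 V3 : Finset (Fin n),
        Disjoint V1 V2 → Disjoint V1 V3 → Disjoint V2 V3 → V1 ∪ V2 ∪ V3 = univ →
        V1.card % 3 = V2.card % 3 → V2.card % 3 = V3.card % 3 →
        (∀ v ∈ V1, (1/3 - ξ) * n ≤ (outDegOn G v V2 : ℝ) ∧
          (1/3 - ξ) * n ≤ (inDegOn G v V3 : ℝ)) →
        (∀ v ∈ V2, (1/3 - ξ) * n ≤ (outDegOn G v V3 : ℝ) ∧
          (1/3 - ξ) * n ≤ (inDegOn G v V1 : ℝ)) →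
        (∀ v ∈ V3, (1/3 - ξ) * n ≤ (outDegOn G v V1 : ℝ) ∧
          (1/3 - ξ) * n ≤ (inDegOn G v V2 : ℝ)) →
        ∃ C : Finset (Finset (Fin n)), IsCycFactor G C := by
  -- `ε = 1/100` guarantees `5c + 8ξ ≤ 1/6` and `13ξ < 1/3`, which is all the counting needs.
  refine ⟨1/100, by norm_num, fun c ξ _ hc _ hξ => ⟨1, fun n hn _ G hG hmin V1 V2 V3
    h12 h13 h23 hcover hmod12 hmod23 hV1 hV2 hV3 => ?_⟩⟩
  have hceil : ∀ {x : ℝ} {A B C : Finset (Fin n)},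
      (∀ v ∈ A, x ≤ (outDegOn G v B : ℝ) ∧ x ≤ (inDegOn G v C : ℝ)) →
      OutInDegOnGE G ⌈x⌉₊ A B C :=
    fun h v hv => ⟨Nat.ceil_le.2 (h v hv).1, Nat.ceil_le.2 (h v hv).2⟩
  have hδ := Nat.le_ceil ((1/2 - c) * n)
  have hβ := Nat.le_ceil ((1/3 - ξ) * n)
  have hnR : (1 : ℝ) ≤ n := by exact_mod_cast hn
  refine exists_isCycFactor_of_partition hG hn (hceil fun v _ => hmin v) h12 h13 h23 hcover
    hmod12 hmod23 (hceil hV1) (hceil hV2) (hceil hV3) ?_ ?_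
  · exact_mod_cast (by nlinarith : (5 * n : ℝ) ≤ 5 * ⌈(1/2 - c) * n⌉₊ + 8 * ⌈(1/3 - ξ) * n⌉₊)
  · exact_mod_cast (by nlinarith : (4 * n : ℝ) < 13 * ⌈(1/3 - ξ) * n⌉₊)
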